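/- Let K, N ⊆ Π and let J ⊆ Π be any subset with N ⊆ J. Then in the rational group algebra ℚ[W], x_K · x_N = Σ_{P ⊆ N} ( Σ_{M ⊆ J} a_{KJM} · a^J_{MNP} ) · x_P. -/

import Mathlib

open scoped Classical

noncomputable section

/-- The Weyl group of type `Aₙ`, realized as the symmetric group on `n+1` letters
permuting the coordinates of `ℝ^{n+1}`. -/
abbrev WA (n : ℕ) := Equiv.Perm (Fin (n + 1))

/-- The root `eᵢ - eⱼ` (with `i ≠ j`) of the root system `Φ` of type `Aₙ`,
encoded as the ordered pair `(i, j)`. -/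
abbrev RootA (n : ℕ) := Fin (n + 1) × Fin (n + 1)

/-- The natural action of `W(Aₙ)` on roots: `w (eᵢ - eⱼ) = e_{w i} - e_{w j}`. -/
def act (n : ℕ) (w : WA n) (p : RootA n) : RootA n := (w p.1, w p.2)

/-- Membership in the positive system `Φ⁺`: the root `eᵢ - eⱼ` is positive iff `i < j`. -/
def IsPos (n : ℕ) (p : RootA n) : Prop := p.1 < p.2

/-- The simple system `Π = {eᵢ - e_{i+1} : 1 ≤ i ≤ n}` of type `Aₙ`. -/
def PiA (n : ℕ) : Finset (RootA n) :=
  (Finset.univ : Finset (Fin n)).image fun i => (Fin.castSucc i, Fin.succ i)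

/-- The standard parabolic subgroup `W_J`, generated by the reflections `w_r`
(`= the transposition swapping the two coordinates of r`) for `r ∈ J`. -/
def WP (n : ℕ) (J : Finset (RootA n)) : Subgroup (WA n) :=
  Subgroup.closure ((fun p : RootA n => Equiv.swap p.1 p.2) '' (J : Set (RootA n)))

/-- `X_J = {w ∈ W : w(r) ∈ Φ⁺ for all r ∈ J}`, the set of distinguished (minimal length)
coset representatives of the cosets `w W_J`. -/
def XP (n : ℕ) (J : Finset (RootA n)) : Finset (WA n) :=
  Finset.univ.filter fun w => ∀ r ∈ J, IsPos n (act n w r)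

/-- `x_J = Σ_{d ∈ X_J} d` in the rational group algebra `ℚ[W]`. -/
def xA (n : ℕ) (J : Finset (RootA n)) : MonoidAlgebra ℚ (WA n) :=
  ∑ d ∈ XP n J, MonoidAlgebra.of ℚ (WA n) d

/-- `X_{JK} = X_J⁻¹ ∩ X_K`, the distinguished double coset representatives of
`W_J w W_K` in `W`. -/
def XD (n : ℕ) (J K : Finset (RootA n)) : Finset (WA n) :=
  Finset.univ.filter fun w => w⁻¹ ∈ XP n J ∧ w ∈ XP n K

/-- The structure constant `a_{JKL} = #{w ∈ X_{JK} : w⁻¹(J) ∩ K = L}`. -/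
def aC (n : ℕ) (J K L : Finset (RootA n)) : ℕ :=
  ((XD n J K).filter fun w => J.image (act n w⁻¹) ∩ K = L).card

/-- `X_K^J = X_K ∩ W_J` (for `K ⊆ J ⊆ Π`). -/
def XPrel (n : ℕ) (J K : Finset (RootA n)) : Finset (WA n) :=
  (XP n K).filter fun w => w ∈ WP n J

/-- `x_K^J = Σ_{d ∈ X_K ∩ W_J} d` in `ℚ[W]`. -/
def xArel (n : ℕ) (J K : Finset (RootA n)) : MonoidAlgebra ℚ (WA n) :=
  ∑ d ∈ XPrel n J K, MonoidAlgebra.of ℚ (WA n) d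

/-- The relative structure constant `a^J_{MNP} = #{w ∈ X_{MN} ∩ W_J : w⁻¹(M) ∩ N = P}`. -/
def aCrel (n : ℕ) (J M N P : Finset (RootA n)) : ℕ :=
  (((XD n M N).filter fun w => w ∈ WP n J).filter
    fun w => M.image (act n w⁻¹) ∩ N = P).card

/-- The equivalence relation `J ~ K ⟺ K = w(J) for some w ∈ W` on subsets of roots;
the equivalence class of `x_J` (resp. `x_K^J`) is indexed by the class `Quot.mk (EquivJ n) J`
(resp. `Quot.mk (EquivJ n) K`). -/
def EquivJ (n : ℕ) (J K : Finset (RootA n)) : Prop :=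
  ∃ w : WA n, K = J.image (act n w)

/-!
For `J ⊆ Π` the indices `0, …, n` fall into blocks of consecutive indices joined by roots of
`J`; `W_J` preserves every block and `X_J` consists of the permutations increasing on every
block. A representative of maximal `weight w = ∑ x · w x` in a coset `w W_J` lies in `X_J`,
because composing with the transposition of a descent raises the weight; and `X_J ∩ W_J = 1`
gives uniqueness. Hence `x_N = x_J · x_N^J` for `N ⊆ J`, and the bijection `(u, v) ↦ (σ, u v)`,
with `σ⁻¹` the representative of `v⁻¹ W_M`, proves Solomon's formula
`x_M^J x_N^J = ∑_P a^J_{MNP} x_P^J` inside `W_J`. Finally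
`x_K x_N = (x_K x_J) x_N^J = ∑_M a_{KJM} x_J x_M^J x_N^J`, which the formula in `W_J` expands.
-/

open Finset

namespace WeylA

variable {n : ℕ}

lemma mem_PiA_iff {r : RootA n} : r ∈ PiA n ↔ (r.1 : ℕ) + 1 = r.2 := by
  simp only [PiA, mem_image, mem_univ, true_and]
  constructor
  · rintro ⟨i, rfl⟩
    simp
  · intro h
    exact ⟨⟨r.1, by omega⟩, Prod.ext (Fin.ext rfl) (Fin.ext (by simp [h]))⟩

lemma fst_lt_snd_of_mem_PiA {r : RootA n} (hr : r ∈ PiA n) : r.1 < r.2 := by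
  rw [Fin.lt_def, ← mem_PiA_iff.1 hr]
  omega

lemma mem_XP_iff {J : Finset (RootA n)} {w : WA n} : w ∈ XP n J ↔ ∀ r ∈ J, w r.1 < w r.2 := by
  simp [XP, IsPos, act]

lemma mem_XPrel_iff {J K : Finset (RootA n)} {w : WA n} :
    w ∈ XPrel n J K ↔ w ∈ XP n K ∧ w ∈ WP n J :=
  mem_filter

lemma mem_XD_iff {M N : Finset (RootA n)} {w : WA n} :
    w ∈ XD n M N ↔ w⁻¹ ∈ XP n M ∧ w ∈ XP n N := by
  simp [XD]

lemma mem_image_act_inv_iff {M : Finset (RootA n)} {σ : WA n} {r : RootA n} :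
    r ∈ M.image (act n σ⁻¹) ↔ act n σ r ∈ M := by
  constructor
  · rintro h
    obtain ⟨s, hs, rfl⟩ := mem_image.1 h
    simpa [act] using hs
  · exact fun h => mem_image.2 ⟨_, h, by simp [act]⟩

def SameBlock (J : Finset (RootA n)) (a b : Fin (n + 1)) : Prop :=
  ∀ r ∈ PiA n, min (a : ℕ) b ≤ r.1 → (r.2 : ℕ) ≤ max (a : ℕ) b → r ∈ J

namespace SameBlock

variable {J : Finset (RootA n)} {a b c d : Fin (n + 1)}

lemma refl (J : Finset (RootA n)) (a : Fin (n + 1)) : SameBlock J a a := fun r hr h₁ h₂ => by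
  have := mem_PiA_iff.1 hr
  omega

lemma symm (h : SameBlock J a b) : SameBlock J b a :=
  fun r hr h₁ h₂ => h r hr (by omega) (by omega)

lemma trans (hab : SameBlock J a b) (hbc : SameBlock J b c) : SameBlock J a c :=
  fun r hr h₁ h₂ => by
    have := mem_PiA_iff.1 hr
    by_cases h : min (a : ℕ) b ≤ r.1 ∧ (r.2 : ℕ) ≤ max (a : ℕ) b
    · exact hab r hr h.1 h.2
    · exact hbc r hr (by omega) (by omega)

lemma mono (h : SameBlock J a b) (hmin : min (a : ℕ) b ≤ min (c : ℕ) d)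
    (hmax : max (c : ℕ) d ≤ max (a : ℕ) b) : SameBlock J c d :=
  fun r hr h₁ h₂ => h r hr (by omega) (by omega)

end SameBlock

lemma sameBlock_iff_mem {J : Finset (RootA n)} {r : RootA n} (hr : r ∈ PiA n) :
    SameBlock J r.1 r.2 ↔ r ∈ J := by
  have h := mem_PiA_iff.1 hr
  refine ⟨fun hb => hb r hr (by omega) (by omega), fun hrJ s hs h₁ h₂ => ?_⟩
  have := mem_PiA_iff.1 hs
  obtain rfl : s = r := Prod.ext (Fin.ext (by omega)) (Fin.ext (by omega))
  exact hrJ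

lemma lt_of_not_sameBlock {J : Finset (RootA n)} {a a' b b' : Fin (n + 1)}
    (ha : SameBlock J a a') (hb : SameBlock J b b') (hab : a < b) (hn : ¬ SameBlock J a b) :
    a' < b' := by
  simp only [SameBlock, not_forall] at hn
  obtain ⟨r, hr, h₁, h₂, hrJ⟩ := hn
  have := mem_PiA_iff.1 hr
  rw [Fin.lt_def] at hab ⊢
  have ha' : (a' : ℕ) ≤ r.1 := by
    by_contra! h
    exact hrJ (ha r hr (by omega) (by omega))
  have hb' : (r.2 : ℕ) ≤ b' := by
    by_contra! h
    exact hrJ (hb r hr (by omega) (by omega))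
  omega

section Blocks

variable {J : Finset (RootA n)} {w : WA n} {a b : Fin (n + 1)}

lemma lt_of_sameBlock (hw : w ∈ XP n J) (hab : SameBlock J a b) (hlt : a < b) : w a < w b := by
  rw [Fin.lt_def] at hlt
  obtain ⟨m, hm⟩ : ∃ m, (b : ℕ) = a + m + 1 := ⟨b - a - 1, by omega⟩
  induction m generalizing b with
  | zero =>
    exact mem_XP_iff.1 hw (a, b) ((sameBlock_iff_mem (mem_PiA_iff.2 hm.symm)).1 hab)
  | succ m ih =>
    let c : Fin (n + 1) := ⟨a + m + 1, by omega⟩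
    have hc : (c : ℕ) = a + m + 1 := rfl
    have hcb : (c, b) ∈ PiA n := mem_PiA_iff.2 (by simp only [hc, hm]; omega)
    exact (ih (hab.mono (by omega) (by omega)) (by omega) hc).trans
      (mem_XP_iff.1 hw _ ((sameBlock_iff_mem hcb).1 (hab.mono (c := c) (d := b) (by omega) (by omega))))

lemma lt_iff_lt_of_sameBlock (hw : w ∈ XP n J) (hab : SameBlock J a b) : w a < w b ↔ a < b := by
  refine ⟨fun h => ?_, lt_of_sameBlock hw hab⟩
  by_contra! hba
  rcases hba.lt_or_eq with hba | rfl
  · exact lt_asymm h (lt_of_sameBlock hw hab.symm hba)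
  · exact lt_irrefl _ h

lemma mem_of_sameBlock_of_act_mem_PiA (hw : w ∈ XP n J) (hab : SameBlock J a b)
    (h : act n w (a, b) ∈ PiA n) : (a, b) ∈ J := by
  have hw' := mem_PiA_iff.1 h
  simp only [act] at hw'
  have hlt := (lt_iff_lt_of_sameBlock hw hab).1 (by rw [Fin.lt_def]; omega)
  rw [Fin.lt_def] at hlt
  have hadj : (a : ℕ) + 1 = b := by
    by_contra hne
    let c : Fin (n + 1) := ⟨a + 1, by omega⟩
    have hc : (c : ℕ) = a + 1 := rfl
    have h₁ := lt_of_sameBlock hw (hab.mono (c := a) (d := c) (by omega) (by omega))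
      (by rw [Fin.lt_def]; omega)
    have h₂ := lt_of_sameBlock hw (hab.mono (c := c) (d := b) (by omega) (by omega))
      (by rw [Fin.lt_def]; omega)
    rw [Fin.lt_def] at h₁ h₂
    omega
  exact (sameBlock_iff_mem (mem_PiA_iff.2 hadj)).1 hab

end Blocks

def blockStabilizer (J : Finset (RootA n)) : Subgroup (WA n) where
  carrier := {w | ∀ x, SameBlock J (w x) x}
  mul_mem' {v w} hv hw x := (hv (w x)).trans (hw x)
  one_mem' x := SameBlock.refl J x
  inv_mem' {w} hw x := by simpa using (hw (w⁻¹ x)).symm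

lemma WP_le_blockStabilizer {J : Finset (RootA n)} (hJ : J ⊆ PiA n) :
    WP n J ≤ blockStabilizer J := by
  refine (Subgroup.closure_le _).2 ?_
  rintro _ ⟨r, hr, rfl⟩ x
  have hb := (sameBlock_iff_mem (hJ hr)).2 hr
  rcases eq_or_ne x r.1 with rfl | h₁
  · simpa using hb.symm
  rcases eq_or_ne x r.2 with rfl | h₂
  · simpa using hb
  · rw [Equiv.swap_apply_of_ne_of_ne h₁ h₂]
    exact SameBlock.refl J x

lemma sameBlock_apply_of_mem_WP {J : Finset (RootA n)} (hJ : J ⊆ PiA n) {w : WA n}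
    (hw : w ∈ WP n J) (x : Fin (n + 1)) : SameBlock J (w x) x :=
  WP_le_blockStabilizer hJ hw x

lemma WP_mono {M J : Finset (RootA n)} (h : M ⊆ J) : WP n M ≤ WP n J :=
  Subgroup.closure_mono (Set.image_mono (coe_subset.2 h))

lemma WP_PiA : WP n (PiA n) = ⊤ := by
  refine eq_top_iff.2 fun w _ => ?_
  have hw : w ∈ Submonoid.closure (Set.range fun i : Fin n => Equiv.swap i.castSucc i.succ) := by
    rw [Equiv.Perm.mclosure_swap_castSucc_succ]
    trivial
  refine Submonoid.closure_le.2 ?_ hw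
  rintro _ ⟨i, rfl⟩
  exact Subgroup.subset_closure ⟨(i.castSucc, i.succ), by simp [PiA], rfl⟩

def weight (w : WA n) : ℕ := ∑ x : Fin (n + 1), (x : ℕ) * (w x : ℕ)

lemma weight_lt_weight_mul_swap {w : WA n} {i j : Fin (n + 1)} (hij : i < j) (h : w j < w i) :
    weight w < weight (w * Equiv.swap i j) := by
  have key : (weight (w * Equiv.swap i j) : ℤ) - weight w =
      (((j : ℕ) : ℤ) - (i : ℕ)) * (((w i : ℕ) : ℤ) - (w j : ℕ)) := by
    simp only [weight, Nat.cast_sum, Nat.cast_mul, ← sum_sub_distrib, Equiv.Perm.mul_apply]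
    rw [Fintype.sum_eq_add i j hij.ne]
    · simp only [Equiv.swap_apply_left, Equiv.swap_apply_right]
      ring
    · rintro x ⟨hi, hj⟩
      simp [Equiv.swap_apply_of_ne_of_ne hi hj]
  have hpos : (0 : ℤ) < (((j : ℕ) : ℤ) - (i : ℕ)) * (((w i : ℕ) : ℤ) - (w j : ℕ)) :=
    mul_pos (sub_pos.2 (by exact_mod_cast hij)) (sub_pos.2 (by exact_mod_cast h))
  have : (weight w : ℤ) < weight (w * Equiv.swap i j) := by linarith
  exact_mod_cast this

lemma exists_max_weight (J : Finset (RootA n)) (w : WA n) :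
    ∃ d : WA n, d⁻¹ * w ∈ WP n J ∧ ∀ d' : WA n, d'⁻¹ * w ∈ WP n J → weight d' ≤ weight d := by
  obtain ⟨d, hd, hmax⟩ := (univ.filter fun d : WA n => d⁻¹ * w ∈ WP n J).exists_max_image
    weight ⟨w, by simp⟩
  exact ⟨d, (mem_filter.1 hd).2, fun d' hd' => hmax d' (by simpa using hd')⟩

def cosetRep (J : Finset (RootA n)) (w : WA n) : WA n :=
  Classical.choose (exists_max_weight J w)

section CosetRep

variable {J : Finset (RootA n)}

lemma inv_cosetRep_mul_mem_WP (J : Finset (RootA n)) (w : WA n) :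
    (cosetRep J w)⁻¹ * w ∈ WP n J :=
  (Classical.choose_spec (exists_max_weight J w)).1

lemma weight_le_weight_cosetRep {w d : WA n} (hd : d⁻¹ * w ∈ WP n J) :
    weight d ≤ weight (cosetRep J w) :=
  (Classical.choose_spec (exists_max_weight J w)).2 d hd

lemma cosetRep_mem_XP (hJ : J ⊆ PiA n) (w : WA n) : cosetRep J w ∈ XP n J := by
  set d := cosetRep J w
  refine mem_XP_iff.2 fun r hr => lt_of_not_ge fun hle => ?_
  have hlt := fst_lt_snd_of_mem_PiA (hJ hr)
  have hs : Equiv.swap r.1 r.2 ∈ WP n J := Subgroup.subset_closure ⟨r, hr, rfl⟩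
  have hcoset : (d * Equiv.swap r.1 r.2)⁻¹ * w ∈ WP n J := by
    rw [mul_inv_rev, mul_assoc]
    exact mul_mem (inv_mem hs) (inv_cosetRep_mul_mem_WP J w)
  exact (weight_lt_weight_mul_swap hlt (hle.lt_of_ne (d.injective.ne hlt.ne'))).not_ge
    (weight_le_weight_cosetRep hcoset)

lemma mul_mem_XP_iff {N : Finset (RootA n)} (hJ : J ⊆ PiA n) (hN : N ⊆ J) {d e : WA n}
    (hd : d ∈ XP n J) (he : e ∈ WP n J) : d * e ∈ XP n N ↔ e ∈ XP n N := by
  simp only [mem_XP_iff, Equiv.Perm.mul_apply]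
  refine forall₂_congr fun r hr => lt_iff_lt_of_sameBlock hd ?_
  exact ((sameBlock_apply_of_mem_WP hJ he r.1).trans
    ((sameBlock_iff_mem (hJ (hN hr))).2 (hN hr))).trans (sameBlock_apply_of_mem_WP hJ he r.2).symm

lemma eq_one_of_mem_XP_of_mem_WP (hJ : J ⊆ PiA n) {e : WA n} (hX : e ∈ XP n J)
    (hW : e ∈ WP n J) : e = 1 := by
  have hmono : StrictMono e := Fin.strictMono_iff_lt_succ.2 fun i => by
    have hr : (i.castSucc, i.succ) ∈ PiA n := mem_PiA_iff.2 (by simp)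
    by_cases hb : SameBlock J i.castSucc i.succ
    · exact mem_XP_iff.1 hX _ ((sameBlock_iff_mem hr).1 hb)
    · exact lt_of_not_sameBlock (sameBlock_apply_of_mem_WP hJ hW _).symm
        (sameBlock_apply_of_mem_WP hJ hW _).symm i.castSucc_lt_succ hb
  exact Equiv.ext (congrFun hmono.eq_id)

lemma eq_of_mem_XP_of_inv_mul_mem_WP (hJ : J ⊆ PiA n) {d d' : WA n} (hd : d ∈ XP n J)
    (hd' : d' ∈ XP n J) (h : d⁻¹ * d' ∈ WP n J) : d = d' :=
  inv_mul_eq_one.1 <| eq_one_of_mem_XP_of_mem_WP hJ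
    ((mul_mem_XP_iff hJ subset_rfl hd h).1 (by rwa [mul_inv_cancel_left])) h

lemma cosetRep_mul (hJ : J ⊆ PiA n) {d e : WA n} (hd : d ∈ XP n J) (he : e ∈ WP n J) :
    cosetRep J (d * e) = d := by
  refine eq_of_mem_XP_of_inv_mul_mem_WP hJ (cosetRep_mem_XP hJ _) hd ?_
  have := mul_mem (inv_cosetRep_mul_mem_WP J (d * e)) (inv_mem he)
  rwa [mul_assoc, mul_inv_cancel_right] at this

end CosetRep

lemma xA_eq_xA_mul_xArel {J N : Finset (RootA n)} (hJ : J ⊆ PiA n) (hN : N ⊆ J) :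
    xA n N = xA n J * xArel n J N := by
  rw [xA, xA, xArel, sum_mul_sum, ← sum_product']
  symm
  refine sum_nbij' (fun p => p.1 * p.2) (fun w => (cosetRep J w, (cosetRep J w)⁻¹ * w))
    ?_ ?_ ?_ ?_ fun p _ => (map_mul _ _ _).symm
  · rintro ⟨d, e⟩ hp
    simp only [mem_product, mem_XPrel_iff] at hp
    exact (mul_mem_XP_iff hJ hN hp.1 hp.2.2).2 hp.2.1
  · intro w hw
    have he := inv_cosetRep_mul_mem_WP J w
    have hd := cosetRep_mem_XP hJ w
    simp only [mem_product, mem_XPrel_iff]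
    exact ⟨hd, (mul_mem_XP_iff hJ hN hd he).1 (by rwa [mul_inv_cancel_left]), he⟩
  · rintro ⟨d, e⟩ hp
    simp only [mem_product, mem_XPrel_iff] at hp
    simp only [cosetRep_mul hJ hp.1 hp.2.2, inv_mul_cancel_left]
  · intro w _
    simp

section Mackey

variable {M N : Finset (RootA n)}

lemma mem_XP_of_mul_mem_XP (hM : M ⊆ PiA n) (hN : N ⊆ PiA n) {σ c : WA n}
    (hσ : σ⁻¹ ∈ XP n M) (hc : c ∈ WP n M) (hcσ : c * σ ∈ XP n N) : σ ∈ XP n N := by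
  refine mem_XP_iff.2 fun r hr => ?_
  have hblock x : SameBlock M ((c * σ) x) (σ x) := sameBlock_apply_of_mem_WP hM hc (σ x)
  by_cases hb : SameBlock M ((c * σ) r.1) ((c * σ) r.2)
  · have := lt_iff_lt_of_sameBlock hσ (((hblock r.1).symm.trans hb).trans (hblock r.2))
    simp only [Equiv.Perm.coe_inv, Equiv.symm_apply_apply] at this
    exact this.1 (fst_lt_snd_of_mem_PiA (hN hr))
  · exact lt_of_not_sameBlock (hblock r.1) (hblock r.2) (mem_XP_iff.1 hcσ r hr) hb

lemma mul_cosetRep_inv_mem_WP (M : Finset (RootA n)) (v : WA n) :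
    v * cosetRep M v⁻¹ ∈ WP n M := by
  simpa using inv_mem (inv_cosetRep_mul_mem_WP M v⁻¹)

lemma inv_cosetRep_inv_mem_XD (hM : M ⊆ PiA n) (hN : N ⊆ PiA n) {v : WA n} (hv : v ∈ XP n N) :
    (cosetRep M v⁻¹)⁻¹ ∈ XD n M N := by
  have hd : ((cosetRep M v⁻¹)⁻¹)⁻¹ ∈ XP n M := by
    rw [inv_inv]
    exact cosetRep_mem_XP hM v⁻¹
  refine mem_XD_iff.2 ⟨hd, mem_XP_of_mul_mem_XP hM hN hd (mul_cosetRep_inv_mem_WP M v) ?_⟩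
  rwa [mul_inv_cancel_right]

lemma mul_mem_XP_inter_iff (hM : M ⊆ PiA n) (hN : N ⊆ PiA n) {σ u c : WA n}
    (hσM : σ⁻¹ ∈ XP n M) (hσN : σ ∈ XP n N) (hu : u ∈ XP n M) (hc : c ∈ WP n M) :
    u * c * σ ∈ XP n (M.image (act n σ⁻¹) ∩ N) ↔ c * σ ∈ XP n N := by
  have hblock x : SameBlock M ((c * σ) x) (σ x) := sameBlock_apply_of_mem_WP hM hc (σ x)
  have hsame (r : RootA n) (hb : SameBlock M (σ r.1) (σ r.2)) :
      (u * c * σ) r.1 < (u * c * σ) r.2 ↔ (c * σ) r.1 < (c * σ) r.2 := by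
    rw [mul_assoc]
    exact lt_iff_lt_of_sameBlock hu (((hblock r.1).trans hb).trans (hblock r.2).symm)
  simp only [mem_XP_iff, mem_inter, mem_image_act_inv_iff]
  -- `σ` maps a root of `N` into one `M`-block exactly when it maps it into `M`.
  constructor
  · intro hg r hr
    by_cases hb : SameBlock M (σ r.1) (σ r.2)
    · have hrM : act n σ r ∈ M :=
        mem_of_sameBlock_of_act_mem_PiA hσM hb (by simpa [act] using hN hr)
      exact (hsame r hb).1 (hg r ⟨hrM, hr⟩)
    · exact lt_of_not_sameBlock (hblock r.1).symm (hblock r.2).symm (mem_XP_iff.1 hσN r hr) hb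
  · rintro hv r ⟨hrM, hr⟩
    exact (hsame r ((sameBlock_iff_mem (hM hrM)).2 hrM)).2 (hv r hr)

lemma sum_aCrel_smul_xArel (J M N : Finset (RootA n)) :
    ∑ P ∈ N.powerset, (aCrel n J M N P : ℚ) • xArel n J P =
      ∑ σ ∈ (XD n M N).filter (· ∈ WP n J), xArel n J (M.image (act n σ⁻¹) ∩ N) := by
  rw [← sum_fiberwise_of_maps_to' fun σ _ => mem_powerset.2 inter_subset_right]
  refine sum_congr rfl fun P _ => ?_
  rw [sum_const, aCrel, Nat.cast_smul_eq_nsmul]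

lemma xArel_mul_xArel_eq_sum {J : Finset (RootA n)} (hJ : J ⊆ PiA n) (hM : M ⊆ J) (hN : N ⊆ J) :
    xArel n J M * xArel n J N =
      ∑ σ ∈ (XD n M N).filter (· ∈ WP n J), xArel n J (M.image (act n σ⁻¹) ∩ N) := by
  have hM' := hM.trans hJ
  have hN' := hN.trans hJ
  simp only [xArel, sum_mul_sum, ← sum_product']
  rw [sum_sigma']
  refine sum_nbij' (fun p => (⟨(cosetRep M p.2⁻¹)⁻¹, p.1 * p.2⟩ : Σ _ : WA n, WA n))
    (fun q => (cosetRep M (q.2 * q.1⁻¹), (cosetRep M (q.2 * q.1⁻¹))⁻¹ * q.2))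
    ?_ ?_ ?_ ?_ fun p _ => (map_mul _ _ _).symm
  · rintro ⟨u, v⟩ hp
    simp only [mem_product, mem_XPrel_iff] at hp
    obtain ⟨⟨hu, huJ⟩, hv, hvJ⟩ := hp
    set d := cosetRep M v⁻¹
    have hc : v * d ∈ WP n M := mul_cosetRep_inv_mem_WP M v
    have hdXD : d⁻¹ ∈ XD n M N := inv_cosetRep_inv_mem_XD hM' hN' hv
    have hv' : v * d * d⁻¹ = v := mul_inv_cancel_right v d
    simp only [mem_sigma, mem_filter, mem_XPrel_iff]
    refine ⟨⟨hdXD, by simpa using mul_mem (inv_mem (WP_mono hM hc)) hvJ⟩, ?_, mul_mem huJ hvJ⟩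
    have := (mul_mem_XP_inter_iff hM' hN' (mem_XD_iff.1 hdXD).1 (mem_XD_iff.1 hdXD).2 hu hc).2
      (hv'.symm ▸ hv)
    rwa [mul_assoc, hv'] at this
  · rintro ⟨σ, g⟩ hq
    simp only [mem_sigma, mem_filter, mem_XD_iff, mem_XPrel_iff] at hq
    obtain ⟨⟨⟨hσM, hσN⟩, hσJ⟩, hg, hgJ⟩ := hq
    set u := cosetRep M (g * σ⁻¹)
    have hu : u ∈ XP n M := cosetRep_mem_XP hM' _
    have hc : u⁻¹ * (g * σ⁻¹) ∈ WP n M := inv_cosetRep_mul_mem_WP M _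
    have hg' : u * (u⁻¹ * (g * σ⁻¹)) * σ = g := by group
    have hvg : u⁻¹ * (g * σ⁻¹) * σ = u⁻¹ * g := by group
    have huJ : u ∈ WP n J := by
      rw [show u = g * σ⁻¹ * (u⁻¹ * (g * σ⁻¹))⁻¹ by group]
      exact mul_mem (mul_mem hgJ (inv_mem hσJ)) (inv_mem (WP_mono hM hc))
    simp only [mem_product, mem_XPrel_iff]
    refine ⟨⟨hu, huJ⟩, ?_, mul_mem (inv_mem huJ) hgJ⟩
    rw [← hvg]
    exact (mul_mem_XP_inter_iff hM' hN' hσM hσN hu hc).1 (hg'.symm ▸ hg)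
  · rintro ⟨u, v⟩ hp
    simp only [mem_product, mem_XPrel_iff] at hp
    simp only [inv_inv, mul_assoc, cosetRep_mul hM' hp.1.1 (mul_cosetRep_inv_mem_WP M v),
      inv_mul_cancel_left]
  · rintro ⟨σ, g⟩ hq
    simp only [mem_sigma, mem_filter, mem_XD_iff] at hq
    set u := cosetRep M (g * σ⁻¹)
    have hc : (u⁻¹ * (g * σ⁻¹))⁻¹ ∈ WP n M := inv_mem (inv_cosetRep_mul_mem_WP M _)
    have hσ : (u⁻¹ * g)⁻¹ = σ⁻¹ * (u⁻¹ * (g * σ⁻¹))⁻¹ := by group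
    simp only [mul_inv_cancel_left, hσ]
    rw [cosetRep_mul hM' hq.1.1.1 hc, inv_inv]

lemma xArel_mul_xArel {J : Finset (RootA n)} (hJ : J ⊆ PiA n) (hM : M ⊆ J) (hN : N ⊆ J) :
    xArel n J M * xArel n J N = ∑ P ∈ N.powerset, (aCrel n J M N P : ℚ) • xArel n J P := by
  rw [xArel_mul_xArel_eq_sum hJ hM hN, sum_aCrel_smul_xArel]

end Mackey

lemma xArel_PiA (K : Finset (RootA n)) : xArel n (PiA n) K = xA n K := by
  simp [xArel, xA, XPrel, WP_PiA]

lemma aCrel_PiA (M N P : Finset (RootA n)) : aCrel n (PiA n) M N P = aC n M N P := by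
  simp [aCrel, aC, WP_PiA]

lemma xA_mul_xA {K J : Finset (RootA n)} (hK : K ⊆ PiA n) (hJ : J ⊆ PiA n) :
    xA n K * xA n J = ∑ M ∈ J.powerset, (aC n K J M : ℚ) • xA n M := by
  simpa only [xArel_PiA, aCrel_PiA] using xArel_mul_xArel subset_rfl hK hJ

lemma xA_mul_xArel {J M N : Finset (RootA n)} (hJ : J ⊆ PiA n) (hM : M ⊆ J) (hN : N ⊆ J) :
    xA n M * xArel n J N = ∑ P ∈ N.powerset, (aCrel n J M N P : ℚ) • xA n P := by
  rw [xA_eq_xA_mul_xArel hJ hM, mul_assoc, xArel_mul_xArel hJ hM hN, mul_sum]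
  refine sum_congr rfl fun P hP => ?_
  rw [mul_smul_comm, ← xA_eq_xA_mul_xArel hJ ((mem_powerset.1 hP).trans hN)]

end WeylA

theorem xA_mul_xA_eq_double_sum_general (n : ℕ) (K N J : Finset (RootA n))
    (hK : K ⊆ PiA n) (hJ : J ⊆ PiA n) (hNJ : N ⊆ J) :
    xA n K * xA n N =
      ∑ P ∈ N.powerset,
        ((∑ M ∈ J.powerset, aC n K J M * aCrel n J M N P : ℕ) : ℚ) • xA n P := by
  calc xA n K * xA n N
      = ∑ M ∈ J.powerset, (aC n K J M : ℚ) • (xA n M * xArel n J N) := by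
        rw [WeylA.xA_eq_xA_mul_xArel hJ hNJ, ← mul_assoc, WeylA.xA_mul_xA hK hJ, sum_mul]
        simp_rw [smul_mul_assoc]
    _ = ∑ M ∈ J.powerset, ∑ P ∈ N.powerset,
          ((aC n K J M * aCrel n J M N P : ℕ) : ℚ) • xA n P := by
        refine sum_congr rfl fun M hM => ?_
        rw [WeylA.xA_mul_xArel hJ (mem_powerset.1 hM) hNJ, smul_sum]
        simp_rw [smul_smul, Nat.cast_mul]
    _ = _ := by
        rw [sum_comm]
        simp_rw [Nat.cast_sum, sum_smul]

/-- for `K, N ⊆ Π` and any `J ⊆ Π` with `N ⊆ J`, in `ℚ[W]` one has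
`x_K · x_N = Σ_{P ⊆ N} (Σ_{M ⊆ J} a_{KJM} · a^J_{MNP}) · x_P`. -/
theorem xA_mul_xA_eq_double_sum (n : ℕ) (hn : 1 ≤ n) (K N J : Finset (RootA n))
    (hK : K ⊆ PiA n) (hN : N ⊆ PiA n) (hJ : J ⊆ PiA n) (hNJ : N ⊆ J) :
    xA n K * xA n N =
      ∑ P ∈ N.powerset,
        ((∑ M ∈ J.powerset, aC n K J M * aCrel n J M N P : ℕ) : ℚ) • xA n P :=
  xA_mul_xA_eq_double_sum_general n K N J hK hJ hNJ
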